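/- arXiv:2410.01097 — 2 statements merged into one kernel-verified Lean document; each statement's English description precedes it below -/
import Mathlib

section
/- Let d > n ≥ 2 be integers, a_F ≥ 1 a real number, and b_F a real number with b_F ≥ n!. Define c_F = (b_F/(n!·a_F))·(d − (n−1)·a_F) − 1/a_F when this formula applies, with the constraint a_F ≤ (d − 1/(n−1))/n. Then c_F ≥ (d − n + 1)/d. -/
/-- Inequality (17): with `d > n ≥ 2`, `1 ≤ a_F ≤ d/n − 1/(n(n−1))` and `b_F ≥ n!`,
the quantity `c_F = (b_F/(n!·a_F))·(d − (n−1)·a_F) − 1/a_F` satisfies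
`c_F ≥ (d − n + 1)/d`. -/
theorem stmt_4 (n d : ℕ) (hn : 2 ≤ n) (hd : n < d) (aF bF : ℝ)
    (haF1 : 1 ≤ aF) (haF2 : aF ≤ ((d : ℝ) - 1 / ((n : ℝ) - 1)) / n)
    (hbF : (Nat.factorial n : ℝ) ≤ bF) :
    (bF / ((Nat.factorial n : ℝ) * aF)) * ((d : ℝ) - ((n : ℝ) - 1) * aF) - 1 / aF ≥
      ((d : ℝ) - n + 1) / d := by
  have hn' : (2:ℝ) ≤ (n:ℝ) := by exact_mod_cast hn
  have hd' : (n:ℝ) + 1 ≤ (d:ℝ) := by exact_mod_cast hd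
  have haFpos : (0:ℝ) < aF := lt_of_lt_of_le zero_lt_one haF1
  have hfac : (0:ℝ) < (Nat.factorial n : ℝ) := by positivity
  have hN1 : (0:ℝ) < (n:ℝ) - 1 := by linarith
  have hNpos : (0:ℝ) < (n:ℝ) := by linarith
  have hDpos : (0:ℝ) < (d:ℝ) := by linarith
  -- key: aF * n * (n-1) ≤ (n-1)*d - 1
  have hkey : aF * (n:ℝ) * ((n:ℝ) - 1) ≤ ((n:ℝ) - 1) * d - 1 := by
    have h2 : aF * (n:ℝ) ≤ (d:ℝ) - 1 / ((n:ℝ) - 1) := by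
      calc aF * (n:ℝ) ≤ ((d:ℝ) - 1 / ((n:ℝ) - 1)) / (n:ℝ) * n := by
            exact mul_le_mul_of_nonneg_right haF2 (le_of_lt hNpos)
        _ = (d:ℝ) - 1 / ((n:ℝ) - 1) := by field_simp
    have h3 : (aF * (n:ℝ)) * ((n:ℝ) - 1) ≤ ((d:ℝ) - 1 / ((n:ℝ) - 1)) * ((n:ℝ) - 1) :=
      mul_le_mul_of_nonneg_right h2 (le_of_lt hN1)
    have h4 : ((d:ℝ) - 1 / ((n:ℝ) - 1)) * ((n:ℝ) - 1) = ((n:ℝ) - 1) * d - 1 := by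
      field_simp
    linarith [h3, h4.le]
  have hX : 0 < (d:ℝ) - ((n:ℝ) - 1) * aF := by nlinarith
  have h1 : 1 / aF ≤ bF / ((Nat.factorial n : ℝ) * aF) := by
    rw [div_le_div_iff₀ haFpos (by positivity)]
    nlinarith
  have hstep : ((d:ℝ) - ((n:ℝ) - 1) * aF - 1) / aF ≤
      (bF / ((Nat.factorial n : ℝ) * aF)) * ((d : ℝ) - ((n : ℝ) - 1) * aF) - 1 / aF := by
    have := mul_le_mul_of_nonneg_right h1 hX.le
    have heq : 1 / aF * ((d:ℝ) - ((n:ℝ) - 1) * aF) - 1 / aF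
        = ((d:ℝ) - ((n:ℝ) - 1) * aF - 1) / aF := by field_simp
    linarith [this, heq]
  have hfinal : ((d : ℝ) - n + 1) / d ≤ ((d:ℝ) - ((n:ℝ) - 1) * aF - 1) / aF := by
    rw [div_le_div_iff₀ hDpos haFpos]
    have hf : (0:ℝ) ≤ (n:ℝ) * d - n + 1 := by nlinarith
    have hm : aF * (n:ℝ) * ((n:ℝ) - 1) * ((n:ℝ) * d - n + 1)
        ≤ (((n:ℝ) - 1) * d - 1) * ((n:ℝ) * d - n + 1) :=
      mul_le_mul_of_nonneg_right hkey hf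
    have hscaled : 0 ≤ (n:ℝ) * ((n:ℝ) - 1) *
        (((d:ℝ) * d - d) - aF * ((n:ℝ) * d - n + 1)) := by nlinarith [hm]
    have hpos : (0:ℝ) < (n:ℝ) * ((n:ℝ) - 1) := mul_pos hNpos hN1
    nlinarith [hscaled, hpos, mul_pos hpos hDpos]
  linarith
end

section
/- Let G(X₁,X₂) = AX₁² + BX₁X₂ + CX₂² be a positive definite binary quadratic form with integer coefficients (so B² − 4AC < 0, A > 0) and let q ≥ 1 be a real number. Then the number N_G(q) of integer points (a₁,a₂) with G(a₁,a₂) ≤ q satisfies |N_G(q) − 2πq/√(4AC − B²)| ≪ q^{1/2}, where the implied constant is absolute. -/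
set_option maxHeartbeats 1000000

open Real intervalIntegral

private def Gf (A B C : ℤ) (p : ℤ × ℤ) : ℝ :=
  (A : ℝ) * p.1 ^ 2 + B * p.1 * p.2 + C * p.2 ^ 2

private def Sset (A B C : ℤ) (q : ℝ) : Set (ℤ × ℤ) := {p | Gf A B C p ≤ q}

private lemma ncard_comp (A B C A' B' C' : ℤ) (e : (ℤ × ℤ) ≃ (ℤ × ℤ))
    (h : ∀ p, Gf A' B' C' p = Gf A B C (e p)) (q : ℝ) :
    (Sset A B C q).ncard = (Sset A' B' C' q).ncard := by
  have hset : Sset A' B' C' q = e ⁻¹' (Sset A B C q) := by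
    ext p; simp [Sset, Set.mem_preimage, h p, Set.mem_setOf_eq]
  rw [hset, Set.ncard_preimage_of_injective_subset_range e.injective
    (by rw [e.range_eq_univ]; exact Set.subset_univ _)]

private lemma ncard_translate (A B C k : ℤ) (q : ℝ) :
    (Sset A B C q).ncard = (Sset A (B + 2*A*k) (A*k^2 + B*k + C) q).ncard := by
  refine ncard_comp A B C _ _ _ ⟨fun p => (p.1 + k * p.2, p.2), fun p => (p.1 - k * p.2, p.2),
    fun p => by simp, fun p => by simp⟩ (fun p => ?_) q
  simp only [Gf, Equiv.coe_fn_mk]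
  push_cast; ring

private lemma ncard_swap (A B C : ℤ) (q : ℝ) :
    (Sset A B C q).ncard = (Sset C (-B) A q).ncard := by
  refine ncard_comp A B C _ _ _ ⟨fun p => (p.2, -p.1), fun p => (-p.2, p.1),
    fun p => by simp, fun p => by simp⟩ (fun p => ?_) q
  simp only [Gf, Equiv.coe_fn_mk]
  push_cast; ring

private lemma reduce_aux : ∀ n : ℕ, ∀ A B C : ℤ, A.toNat ≤ n → 0 < A → B^2 - 4*A*C < 0 →
    ∃ A' B' C' : ℤ, 0 < A' ∧ |B'| ≤ A' ∧ A' ≤ C' ∧ B'^2 - 4*A'*C' = B^2 - 4*A*C ∧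
      ∀ q : ℝ, (Sset A B C q).ncard = (Sset A' B' C' q).ncard := by
  intro n
  induction n using Nat.strong_induction_on with
  | _ n ih =>
    intro A B C hAn hA0 hD
    set k : ℤ := ⌊((A - B : ℤ) : ℚ) / (2*A)⌋ with hk
    set B' : ℤ := B + 2*A*k with hB'
    set C' : ℤ := A*k^2 + B*k + C with hC'
    have h2A : (0:ℚ) < 2*A := by positivity
    have hfl : (k:ℚ) ≤ ((A - B : ℤ) : ℚ) / (2*A) := Int.floor_le _
    have hfl2 : ((A - B : ℤ) : ℚ) / (2*A) < k + 1 := Int.lt_floor_add_one _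
    have hub : B' ≤ A := by
      have : (k:ℚ) * (2*A) ≤ ((A - B : ℤ) : ℚ) := by
        rw [← le_div_iff₀ h2A]; exact hfl
      have : (B' : ℚ) ≤ A := by push_cast [hB'] at this ⊢; linarith
      exact_mod_cast this
    have hlb : -A ≤ B' := by
      have : ((A - B : ℤ) : ℚ) < (k + 1) * (2*A) := by
        rw [← div_lt_iff₀ h2A]; exact hfl2
      have : (-A : ℚ) ≤ B' := by push_cast [hB'] at this ⊢; linarith
      exact_mod_cast this
    have hdisc : B'^2 - 4*A*C' = B^2 - 4*A*C := by rw [hB', hC']; ring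
    have hC'pos : 0 < C' := by
      have h1 : B'^2 - 4*A*C' < 0 := by rw [hdisc]; exact hD
      nlinarith [sq_nonneg B']
    by_cases hAC : A ≤ C'
    · exact ⟨A, B', C', hA0, abs_le.mpr ⟨hlb, hub⟩, hAC, hdisc,
        fun q => ncard_translate A B C k q⟩
    · push_neg at hAC
      have hlt : C'.toNat < n := by
        have h1 : C'.toNat < A.toNat := by omega
        omega
      have hD2 : (-B')^2 - 4*C'*A < 0 := by nlinarith [hdisc, hD]
      obtain ⟨A'', B'', C'', h1, h2, h3, h4, h5⟩ :=
        ih C'.toNat hlt C' (-B') A le_rfl hC'pos hD2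
      refine ⟨A'', B'', C'', h1, h2, h3, ?_, fun q => ?_⟩
      · rw [h4]; rw [← hdisc]; ring
      · rw [ncard_translate A B C k q, ncard_swap A B' C' q, h5 q]

private lemma reduce (A B C : ℤ) (hA0 : 0 < A) (hD : B^2 - 4*A*C < 0) :
    ∃ A' B' C' : ℤ, 0 < A' ∧ |B'| ≤ A' ∧ A' ≤ C' ∧ B'^2 - 4*A'*C' = B^2 - 4*A*C ∧
      ∀ q : ℝ, (Sset A B C q).ncard = (Sset A' B' C' q).ncard :=
  reduce_aux A.toNat A B C le_rfl hA0 hD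

private lemma quarter_circle : ∫ x in (0:ℝ)..1, Real.sqrt (1 - x^2) = π/4 := by
  have h := integral_sqrt_one_sub_sq
  have hsplit : ∫ x in (-1:ℝ)..1, Real.sqrt (1 - x^2) =
      (∫ x in (-1:ℝ)..0, Real.sqrt (1 - x^2)) + ∫ x in (0:ℝ)..1, Real.sqrt (1 - x^2) := by
    rw [integral_add_adjacent_intervals] <;>
      exact (Continuous.intervalIntegrable (by continuity) _ _)
  have hneg : (∫ x in (-1:ℝ)..0, Real.sqrt (1 - x^2)) = ∫ x in (0:ℝ)..1, Real.sqrt (1 - x^2) := by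
    have := intervalIntegral.integral_comp_neg (a := (0:ℝ)) (b := 1)
      (fun x => Real.sqrt (1 - x^2))
    simp only [neg_zero, neg_neg] at this
    rw [← this]
    congr 1; ext x; rw [neg_pow]; ring_nf
  rw [hsplit, hneg] at h
  linarith

private lemma ellipse_integral (c q Dr : ℝ) (hc : 0 < c) (hq : 0 < q) (hD : 0 < Dr) :
    ∫ x in (0:ℝ)..(Real.sqrt (4*c*q/Dr)), Real.sqrt (4*c*q - Dr*x^2) = π * c * q / Real.sqrt Dr := by
  set R : ℝ := Real.sqrt (4*c*q) with hR
  set s : ℝ := Real.sqrt Dr with hs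
  have hRpos : 0 < R := Real.sqrt_pos.mpr (by positivity)
  have hspos : 0 < s := Real.sqrt_pos.mpr hD
  have hR2 : R^2 = 4*c*q := Real.sq_sqrt (by positivity)
  have hs2 : s^2 = Dr := Real.sq_sqrt hD.le
  have hr : Real.sqrt (4*c*q/Dr) = R/s := Real.sqrt_div (by positivity) _
  have hpt : ∀ x : ℝ, Real.sqrt (4*c*q - Dr*x^2) = R * Real.sqrt (1 - (s/R*x)^2) := by
    intro x
    have : 4*c*q - Dr*x^2 = R^2 * (1 - (s/R*x)^2) := by
      field_simp
      rw [hs2, hR2]; ring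
    rw [this, Real.sqrt_mul (by positivity), Real.sqrt_sq hRpos.le]
  rw [hr]
  calc ∫ x in (0:ℝ)..(R/s), Real.sqrt (4*c*q - Dr*x^2)
      = ∫ x in (0:ℝ)..(R/s), R * Real.sqrt (1 - (s/R*x)^2) := by
        congr 1; ext x; exact hpt x
    _ = R * ∫ x in (0:ℝ)..(R/s), Real.sqrt (1 - (s/R*x)^2) := integral_const_mul _ _
    _ = R * ((s/R)⁻¹ * ∫ x in (s/R*0)..(s/R*(R/s)), Real.sqrt (1 - x^2)) := by
        rw [integral_comp_mul_left (fun x => Real.sqrt (1 - x^2)) (by positivity)]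
        simp [smul_eq_mul]
    _ = π * c * q / s := by
        rw [mul_zero, show s/R*(R/s) = 1 by field_simp, quarter_circle]
        field_simp
        linear_combination hR2
private noncomputable def fA (c q Dr x : ℝ) : ℝ := Real.sqrt (max (4*c*q - Dr*x^2) 0) / c

private lemma fA_cont (c q Dr : ℝ) : Continuous (fA c q Dr) :=
  (Real.continuous_sqrt.comp ((by continuity : Continuous fun x : ℝ =>
    4*c*q - Dr*x^2).max continuous_const)).div_const c

private lemma fA_nonneg (c q Dr : ℝ) (hc : 0 < c) (x : ℝ) : 0 ≤ fA c q Dr x :=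
  div_nonneg (Real.sqrt_nonneg _) hc.le

private lemma fA_even (c q Dr t : ℝ) : fA c q Dr (-t) = fA c q Dr t := by
  unfold fA; rw [neg_pow]; norm_num

private lemma fA_anti (c q Dr t : ℝ) (hc : 0 < c) (hD : 0 < Dr) :
    AntitoneOn (fA c q Dr) (Set.Icc (0:ℝ) t) := by
  intro x hx y hy hxy
  unfold fA
  have hx2 : x^2 ≤ y^2 := pow_le_pow_left₀ hx.1 hxy 2
  have hnum : 4*c*q - Dr*y^2 ≤ 4*c*q - Dr*x^2 := by nlinarith
  gcongr

private lemma fA_zero (c q Dr t : ℝ) (hc : 0 < c) (hq : 0 < q) (hD : 0 < Dr)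
    (ht : Real.sqrt (4*c*q/Dr) ≤ t) : fA c q Dr t = 0 := by
  have hr0 : (0:ℝ) ≤ Real.sqrt (4*c*q/Dr) := Real.sqrt_nonneg _
  have hr2 : (Real.sqrt (4*c*q/Dr))^2 = 4*c*q/Dr := Real.sq_sqrt (by positivity)
  have h1 : (Real.sqrt (4*c*q/Dr))^2 ≤ t^2 := pow_le_pow_left₀ hr0 ht 2
  have h2 : 4*c*q ≤ Dr*t^2 := by
    rw [hr2] at h1
    rw [div_le_iff₀ hD] at h1
    nlinarith
  unfold fA
  rw [max_eq_right (by linarith), Real.sqrt_zero, zero_div]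

private lemma fA_integral_t (c q Dr t : ℝ) (hc : 0 < c) (hq : 0 < q) (hD : 0 < Dr)
    (ht : Real.sqrt (4*c*q/Dr) ≤ t) :
    ∫ x in (0:ℝ)..t, fA c q Dr x = π*q/Real.sqrt Dr := by
  set r : ℝ := Real.sqrt (4*c*q/Dr) with hr'
  have hr0 : 0 ≤ r := Real.sqrt_nonneg _
  have hr2 : r^2 = 4*c*q/Dr := Real.sq_sqrt (by positivity)
  have hIr : ∫ x in (0:ℝ)..r, fA c q Dr x = π*q/Real.sqrt Dr := by
    have hcongr : Set.EqOn (fA c q Dr) (fun x => Real.sqrt (4*c*q - Dr*x^2)/c)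
        (Set.uIcc 0 r) := by
      intro x hx
      rw [Set.uIcc_of_le hr0] at hx
      have h1 : x^2 ≤ r^2 := pow_le_pow_left₀ hx.1 hx.2 2
      rw [hr2] at h1
      rw [le_div_iff₀ hD] at h1
      unfold fA
      rw [max_eq_left (by nlinarith)]
    rw [intervalIntegral.integral_congr hcongr, intervalIntegral.integral_div, hr',
      ellipse_integral c q Dr hc hq hD]
    field_simp
  have h1 : ∫ x in r..t, fA c q Dr x = 0 := by
    have hcongr : Set.EqOn (fA c q Dr) (fun _ => (0:ℝ)) (Set.uIcc r t) := by
      intro x hx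
      rw [Set.uIcc_of_le ht] at hx
      exact fA_zero c q Dr x hc hq hD hx.1
    rw [intervalIntegral.integral_congr hcongr]; simp
  have h2 := intervalIntegral.integral_add_adjacent_intervals
    ((fA_cont c q Dr).intervalIntegrable (μ := MeasureTheory.volume) 0 r) ((fA_cont c q Dr).intervalIntegrable (μ := MeasureTheory.volume) r t)
  rw [← h2, hIr, h1, add_zero]

private lemma key_sum (c q Dr : ℝ) (hc : 0 < c) (hq : 0 < q) (hD : 0 < Dr) (m : ℕ)
    (hm : Real.sqrt (4*c*q/Dr) ≤ (m:ℝ)) :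
    |(∑ x ∈ Finset.Icc (-(m:ℤ)) m, fA c q Dr (x:ℝ)) - 2*π*q/Real.sqrt Dr|
      ≤ fA c q Dr 0 := by
  set E : ℝ := ∑ i ∈ Finset.range (m+1), fA c q Dr i with hE'
  have hrm1 : Real.sqrt (4*c*q/Dr) ≤ ((m+1:ℕ):ℝ) := by push_cast; linarith
  have hE1 : π*q/Real.sqrt Dr ≤ E := by
    have h := AntitoneOn.integral_le_sum (x₀ := (0:ℝ)) (a := m+1) (f := fA c q Dr)
      (by simpa using fA_anti c q Dr ((m+1:ℕ):ℝ) hc hD)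
    simp only [zero_add] at h
    rw [fA_integral_t c q Dr _ hc hq hD hrm1] at h
    exact h
  have hE2 : E ≤ fA c q Dr 0 + π*q/Real.sqrt Dr := by
    have h := AntitoneOn.sum_le_integral (x₀ := (0:ℝ)) (a := m) (f := fA c q Dr)
      (by simpa using fA_anti c q Dr ((m:ℕ):ℝ) hc hD)
    simp only [zero_add] at h
    rw [fA_integral_t c q Dr _ hc hq hD hm] at h
    rw [hE', Finset.sum_range_succ' (fun i => fA c q Dr i) m]
    push_cast at h ⊢
    linarith
  have hsymm : ∑ x ∈ Finset.Icc (-(m:ℤ)) m, fA c q Dr (x:ℝ) = 2*E - fA c q Dr 0 := by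
    have hsplit : Finset.Icc (-(m:ℤ)) m = Finset.Icc (-(m:ℤ)) (-1) ∪ Finset.Icc 0 m := by
      ext t; simp only [Finset.mem_Icc, Finset.mem_union]; omega
    have hdisj : Disjoint (Finset.Icc (-(m:ℤ)) (-1)) (Finset.Icc (0:ℤ) m) := by
      rw [Finset.disjoint_left]
      intro t h1 h2
      simp only [Finset.mem_Icc] at h1 h2
      omega
    rw [hsplit, Finset.sum_union hdisj]
    have hneg : ∑ x ∈ Finset.Icc (-(m:ℤ)) (-1), fA c q Dr (x:ℝ)
        = ∑ x ∈ Finset.Icc (1:ℤ) m, fA c q Dr (x:ℝ) := by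
      refine Finset.sum_nbij' (i := fun x => -x) (j := fun x => -x) ?_ ?_ ?_ ?_ ?_
      · intro x hx; simp only [Finset.mem_Icc] at *; omega
      · intro x hx; simp only [Finset.mem_Icc] at *; omega
      · intro x _; ring
      · intro x _; ring
      · intro x _
        rw [show ((-x:ℤ):ℝ) = -(x:ℝ) by push_cast; ring, fA_even]
    have hz2E : ∑ x ∈ Finset.Icc (0:ℤ) m, fA c q Dr (x:ℝ) = E := by
      refine Finset.sum_nbij' (i := fun x : ℤ => x.toNat) (j := fun n : ℕ => (n:ℤ)) ?_ ?_ ?_ ?_ ?_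
      · intro x hx; simp only [Finset.mem_Icc] at hx; simp only [Finset.mem_range]; omega
      · intro n hn; simp only [Finset.mem_range] at hn; simp only [Finset.mem_Icc]; omega
      · intro x hx; simp only [Finset.mem_Icc] at hx
        show ((x.toNat : ℕ) : ℤ) = x; omega
      · intro n _; simp
      · intro x hx
        simp only [Finset.mem_Icc] at hx
        congr 1
        exact_mod_cast (Int.toNat_of_nonneg hx.1).symm
    have hins : ∑ x ∈ Finset.Icc (0:ℤ) m, fA c q Dr (x:ℝ)
        = fA c q Dr 0 + ∑ x ∈ Finset.Icc (1:ℤ) m, fA c q Dr (x:ℝ) := by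
      rw [show Finset.Icc (0:ℤ) m = insert (0:ℤ) (Finset.Icc 1 (m:ℤ)) by
        ext t; simp only [Finset.mem_Icc, Finset.mem_insert]; omega,
        Finset.sum_insert (by simp)]
      norm_num
    rw [hneg]
    linarith [hz2E, hins]
  rw [hsymm, abs_le]
  have h2 : 2*π*q/Real.sqrt Dr = 2*(π*q/Real.sqrt Dr) := by ring
  rw [h2]
  constructor <;> linarith
private lemma main_reduced (A B C : ℤ) (hA : 0 < A) (hBA : |B| ≤ A) (hAC : A ≤ C)
    (q : ℝ) (hq : 1 ≤ q) :
    |(((Sset A B C q).ncard : ℝ)) - 2 * π * q / Real.sqrt ((4*A*C - B^2 : ℤ) : ℝ)|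
      ≤ 20 * Real.sqrt q := by
  classical
  set a : ℝ := (A : ℝ) with ha'
  set b : ℝ := (B : ℝ) with hb'
  set c : ℝ := (C : ℝ) with hc'
  have hA1 : (1:ℤ) ≤ A := hA
  have ha1 : 1 ≤ a := by rw [ha']; exact_mod_cast hA1
  have hac : a ≤ c := by rw [ha', hc']; exact_mod_cast hAC
  have hb : |b| ≤ a := by
    rw [ha', hb', ← Int.cast_abs]; exact_mod_cast hBA
  have hcpos : 0 < c := by linarith
  have hq0 : 0 < q := by linarith
  set Dr : ℝ := 4*a*c - b^2 with hDr'
  have hb2 : b^2 ≤ a*c := by nlinarith [abs_nonneg b, sq_abs b]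
  have hDr3 : 3*a*c ≤ Dr := by rw [hDr']; nlinarith
  have hDrpos : 0 < Dr := by nlinarith
  have hDcast : ((4*A*C - B^2 : ℤ) : ℝ) = Dr := by push_cast [hDr', ha', hb', hc']; ring
  set r : ℝ := Real.sqrt (4*c*q/Dr) with hr'
  have hr0 : 0 ≤ r := Real.sqrt_nonneg _
  have hr2 : r^2 = 4*c*q/Dr := Real.sq_sqrt (by positivity)
  set m : ℕ := ⌈r⌉₊ with hm'
  have hrm : r ≤ (m:ℝ) := Nat.le_ceil r
  have hmb : (m:ℝ) ≤ r + 1 := by rw [hm']; exact (Nat.ceil_lt_add_one hr0).le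
  clear_value m
  -- membership characterization
  have hmem : ∀ p : ℤ × ℤ, p ∈ Sset A B C q ↔
      (2*c*(p.2:ℝ) + b*(p.1:ℝ))^2 ≤ 4*c*q - Dr*(p.1:ℝ)^2 := by
    intro p
    have hiden : 4*c*(Gf A B C p - q) =
        (2*c*(p.2:ℝ) + b*(p.1:ℝ))^2 + Dr*(p.1:ℝ)^2 - 4*c*q := by
      simp only [Gf, hDr', ha', hb', hc']; ring
    simp only [Sset, Set.mem_setOf_eq]
    constructor <;> intro h <;> nlinarith [hiden]
  have hmem2 : ∀ p : ℤ × ℤ, p ∈ Sset A B C q →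
      Dr*(p.2:ℝ)^2 ≤ 4*c*q := by
    intro p hp
    have hiden : 4*a*(Gf A B C p - q) =
        (2*a*(p.1:ℝ) + b*(p.2:ℝ))^2 + Dr*(p.2:ℝ)^2 - 4*a*q := by
      simp only [Gf, hDr', ha', hb', hc']; ring
    simp only [Sset, Set.mem_setOf_eq] at hp
    nlinarith [sq_nonneg (2*a*(p.1:ℝ) + b*(p.2:ℝ)), sq_nonneg (p.2:ℝ)]
  have habs_le : ∀ t : ℝ, Dr*t^2 ≤ 4*c*q → |t| ≤ r := by
    intro t ht
    rw [← Real.sqrt_sq_eq_abs, hr']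
    refine Real.sqrt_le_sqrt ?_
    rw [le_div_iff₀ hDrpos]
    nlinarith
  have hxmem : ∀ p : ℤ × ℤ, p ∈ Sset A B C q → p.1 ∈ Finset.Icc (-(m:ℤ)) m := by
    intro p hp
    have h1 := (hmem p).mp hp
    have h2 : |(p.1:ℝ)| ≤ r := habs_le _ (by nlinarith [sq_nonneg (2*c*(p.2:ℝ) + b*(p.1:ℝ))])
    rw [abs_le] at h2
    simp only [Finset.mem_Icc]
    constructor
    · exact_mod_cast le_trans (neg_le_neg hrm) (by exact_mod_cast h2.1 : -(r:ℝ) ≤ (p.1:ℝ))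
    · exact_mod_cast le_trans h2.2 hrm
  have hymem : ∀ p : ℤ × ℤ, p ∈ Sset A B C q → p.2 ∈ Finset.Icc (-(m:ℤ)) m := by
    intro p hp
    have h2 : |(p.2:ℝ)| ≤ r := habs_le _ (hmem2 p hp)
    rw [abs_le] at h2
    simp only [Finset.mem_Icc]
    constructor
    · exact_mod_cast le_trans (neg_le_neg hrm) (by exact_mod_cast h2.1 : -(r:ℝ) ≤ (p.2:ℝ))
    · exact_mod_cast le_trans h2.2 hrm
  set T : Finset (ℤ × ℤ) :=
    (Finset.Icc (-(m:ℤ)) m ×ˢ Finset.Icc (-(m:ℤ)) m).filter (fun p => Gf A B C p ≤ q) with hT'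
  have hST : Sset A B C q = ↑T := by
    ext p
    simp only [hT', Finset.coe_filter, Finset.mem_product, Set.mem_setOf_eq]
    constructor
    · intro hp; exact ⟨⟨hxmem p hp, hymem p hp⟩, hp⟩
    · intro hp; exact hp.2
  have hN : ((Sset A B C q).ncard : ℝ) = (T.card : ℝ) := by
    rw [hST, Set.ncard_coe_finset]
  set col : ℤ → Finset ℤ :=
    fun x => (Finset.Icc (-(m:ℤ)) m).filter (fun y => Gf A B C (x, y) ≤ q) with hcol'
  have hTcard : T.card = ∑ x ∈ Finset.Icc (-(m:ℤ)) m, (col x).card := by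
    rw [Finset.card_eq_sum_card_fiberwise (f := Prod.fst) (t := Finset.Icc (-(m:ℤ)) m)
      (fun p hp => by
        simp only [hT', Finset.mem_coe, Finset.mem_filter, Finset.mem_product] at hp
        exact hp.1.1)]
    refine Finset.sum_congr rfl fun x hx => ?_
    refine Finset.card_nbij' (fun p => p.2) (fun y => (x, y)) ?_ ?_ ?_ ?_
    · intro p hp
      simp only [Finset.mem_coe, Finset.mem_filter, hT', Finset.mem_product] at hp
      obtain ⟨⟨⟨_, hy⟩, hpred⟩, hfst⟩ := hp
      simp only [hcol', Finset.mem_coe, Finset.mem_filter]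
      refine ⟨hy, ?_⟩
      rwa [show (x, p.2) = p by rw [← hfst]]
    · intro y hy
      simp only [hcol', Finset.mem_coe, Finset.mem_filter] at hy
      simp only [Finset.mem_coe, Finset.mem_filter, hT', Finset.mem_product]
      exact ⟨⟨⟨hx, hy.1⟩, hy.2⟩, trivial⟩
    · intro p hp
      simp only [Finset.mem_coe, Finset.mem_filter] at hp
      rw [← hp.2]
    · intro y hy; rfl
  have hcol_est : ∀ x : ℤ, |((col x).card : ℝ) - fA c q Dr (x:ℝ)| ≤ 1 := by
    intro x
    set M : ℝ := 4*c*q - Dr*(x:ℝ)^2 with hM'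
    by_cases hM : 0 ≤ M
    · set l : ℝ := (-b*(x:ℝ) - Real.sqrt M)/(2*c) with hl'
      set u : ℝ := (-b*(x:ℝ) + Real.sqrt M)/(2*c) with hu'
      have hsM : 0 ≤ Real.sqrt M := Real.sqrt_nonneg M
      have hiff : ∀ y : ℤ, Gf A B C (x, y) ≤ q ↔ (l ≤ (y:ℝ) ∧ (y:ℝ) ≤ u) := by
        intro y
        have h0 := hmem (x, y)
        simp only [Sset, Set.mem_setOf_eq] at h0
        rw [h0]
        constructor
        · intro h
          have habs : |2*c*(y:ℝ) + b*(x:ℝ)| ≤ Real.sqrt M := by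
            rw [← Real.sqrt_sq_eq_abs]
            exact Real.sqrt_le_sqrt h
          rw [abs_le] at habs
          constructor
          · rw [hl', div_le_iff₀ (by positivity)]; nlinarith [habs.1]
          · rw [hu', le_div_iff₀ (by positivity)]; nlinarith [habs.2]
        · rintro ⟨h1, h2⟩
          rw [hl', div_le_iff₀ (by positivity)] at h1
          rw [hu', le_div_iff₀ (by positivity)] at h2
          have habs : (2*c*(y:ℝ) + b*(x:ℝ))^2 ≤ (Real.sqrt M)^2 :=
            sq_le_sq' (by nlinarith) (by nlinarith)
          rwa [Real.sq_sqrt hM] at habs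
      have hcols : col x = Finset.Icc ⌈l⌉ ⌊u⌋ := by
        ext y
        simp only [hcol', Finset.mem_filter, Finset.mem_Icc]
        constructor
        · rintro ⟨hy, hcond⟩
          have h := (hiff y).mp hcond
          exact ⟨Int.ceil_le.mpr h.1, Int.le_floor.mpr h.2⟩
        · rintro ⟨h1, h2⟩
          have hcond := (hiff y).mpr ⟨Int.ceil_le.mp h1, Int.le_floor.mp h2⟩
          have hy : (x, y) ∈ Sset A B C q := by
            simpa [Sset, Set.mem_setOf_eq] using hcond
          refine ⟨?_, hcond⟩
          have := hymem (x, y) hy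
          simpa using this
      have hlu : l ≤ u := by
        rw [hl', hu']
        apply div_le_div_of_nonneg_right ?_ (by positivity)
        linarith
      have hfx : fA c q Dr (x:ℝ) = u - l := by
        unfold fA
        simp only [← hM']
        rw [max_eq_left hM, hl', hu']
        field_simp
        ring
      rw [hcols, Int.card_Icc]
      set z : ℤ := ⌊u⌋ + 1 - ⌈l⌉ with hz'
      have hfl1 : (⌊u⌋:ℝ) ≤ u := Int.floor_le u
      have hfl2 : u - 1 < (⌊u⌋:ℝ) := Int.sub_one_lt_floor u
      have hce1 : l ≤ (⌈l⌉:ℝ) := Int.le_ceil l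
      have hce2 : (⌈l⌉:ℝ) < l + 1 := Int.ceil_lt_add_one l
      have htn : ((z.toNat : ℤ):ℝ) = (z.toNat : ℝ) := by push_cast; ring
      rw [hfx, abs_le]
      rcases le_or_gt z 0 with hzn | hzp
      · rw [Int.toNat_of_nonpos hzn]
        have : (⌈l⌉:ℝ) ≥ (⌊u⌋:ℝ) + 1 := by exact_mod_cast by omega
        constructor <;> simp <;> linarith
      · have h1 : (z.toNat : ℤ) = ⌊u⌋ + 1 - ⌈l⌉ := by rw [Int.toNat_of_nonneg hzp.le]
        have h2 : ((z.toNat : ℕ) : ℝ) = (⌊u⌋:ℝ) + 1 - (⌈l⌉:ℝ) := by exact_mod_cast h1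
        rw [h2]
        constructor <;> linarith
    · push_neg at hM
      have hcols : col x = ∅ := by
        ext y
        simp only [hcol', Finset.mem_filter, Finset.notMem_empty, iff_false, not_and]
        intro hy
        have h0 := hmem (x, y)
        simp only [Sset, Set.mem_setOf_eq] at h0
        rw [h0]
        push_neg
        nlinarith [sq_nonneg (2*c*(y:ℝ) + b*(x:ℝ))]
      have hfx : fA c q Dr (x:ℝ) = 0 := by
        unfold fA
        simp only [← hM']
        rw [max_eq_right hM.le, Real.sqrt_zero, zero_div]
      rw [hcols, hfx]
      simp
  -- sum estimate
  have hsum2 := key_sum c q Dr hcpos hq0 hDrpos m (by rw [← hr']; exact hrm)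
  have hsum1 : |(T.card:ℝ) - ∑ x ∈ Finset.Icc (-(m:ℤ)) m, fA c q Dr (x:ℝ)| ≤ 2*(m:ℝ)+1 := by
    rw [hTcard]
    push_cast
    rw [← Finset.sum_sub_distrib]
    refine (Finset.abs_sum_le_sum_abs _ _).trans ?_
    refine (Finset.sum_le_sum (fun x _ => hcol_est x)).trans ?_
    rw [Finset.sum_const, nsmul_eq_mul, mul_one]
    have hcard : (Finset.Icc (-(m:ℤ)) m).card = 2*m+1 := by
      rw [Int.card_Icc]; omega
    rw [hcard]; push_cast; linarith
  -- numeric bounds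
  have hsq1 : 1 ≤ Real.sqrt q := by
    rw [show (1:ℝ) = Real.sqrt 1 by simp]
    exact Real.sqrt_le_sqrt hq
  have hf00 : fA c q Dr 0 = Real.sqrt (4*c*q)/c := by
    unfold fA
    rw [show (4*c*q - Dr*(0:ℝ)^2) = 4*c*q by ring, max_eq_left (by nlinarith)]
  have hf0b : fA c q Dr 0 ≤ 2*Real.sqrt q := by
    rw [hf00, div_le_iff₀ hcpos]
    have h1 : Real.sqrt (4*c*q) ≤ Real.sqrt (4*c^2*q) := Real.sqrt_le_sqrt (by nlinarith [mul_nonneg (mul_pos hcpos hq0).le (by linarith : (0:ℝ) ≤ c - 1)])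
    have h2 : Real.sqrt (4*c^2*q) = 2*c*Real.sqrt q := by
      rw [show (4*c^2*q) = (2*c)^2*q by ring, Real.sqrt_mul (sq_nonneg _),
        Real.sqrt_sq (by positivity)]
    linarith [h1.trans_eq h2]
  have hrb : r ≤ 2*Real.sqrt q := by
    rw [hr']
    have h1 : 4*c*q/Dr ≤ 4*q := by
      rw [div_le_iff₀ hDrpos]
      have h3 : 0 ≤ (3*a - 1) * (c*q) := mul_nonneg (by linarith) (mul_pos hcpos hq0).le
      have h4 : 4*q*(3*a*c) ≤ 4*q*Dr := mul_le_mul_of_nonneg_left hDr3 (by positivity)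
      nlinarith [h3, h4]
    have h2 : Real.sqrt (4*q) = 2*Real.sqrt q := by
      rw [show (4*q) = 2^2*q by ring, Real.sqrt_mul (by positivity),
        Real.sqrt_sq (by norm_num)]
    calc Real.sqrt (4*c*q/Dr) ≤ Real.sqrt (4*q) := Real.sqrt_le_sqrt h1
      _ = 2*Real.sqrt q := h2
  rw [hDcast, hN]
  calc |(T.card:ℝ) - 2*π*q/Real.sqrt Dr|
      ≤ |(T.card:ℝ) - ∑ x ∈ Finset.Icc (-(m:ℤ)) m, fA c q Dr (x:ℝ)| +
        |(∑ x ∈ Finset.Icc (-(m:ℤ)) m, fA c q Dr (x:ℝ)) - 2*π*q/Real.sqrt Dr| := abs_sub_le _ _ _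
    _ ≤ (2*(m:ℝ)+1) + fA c q Dr 0 := add_le_add hsum1 hsum2
    _ ≤ 20 * Real.sqrt q := by linarith

/-- For a positive definite integral binary quadratic form `G = AX₁² + BX₁X₂ + CX₂²`
and `q ≥ 1`, the number of integer points with `G ≤ q` is `2πq/√(4AC − B²) + O(q^{1/2})`,
with an absolute implied constant. -/
theorem stmt_8 :
    ∃ c : ℝ, 0 < c ∧ ∀ A B C : ℤ, 0 < A → B ^ 2 - 4 * A * C < 0 → ∀ q : ℝ, 1 ≤ q →
      |(({p : ℤ × ℤ | (A : ℝ) * p.1 ^ 2 + B * p.1 * p.2 + C * p.2 ^ 2 ≤ q}.ncard : ℝ)) -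
          2 * π * q / Real.sqrt ((4 * A * C - B ^ 2 : ℤ) : ℝ)| ≤ c * q ^ ((1 : ℝ) / 2) := by
  refine ⟨20, by norm_num, fun A B C hA hD q hq => ?_⟩
  obtain ⟨A', B', C', hA', hB', hC', hdisc, hcount⟩ := reduce A B C hA hD
  have hset : {p : ℤ × ℤ | (A : ℝ) * p.1 ^ 2 + B * p.1 * p.2 + C * p.2 ^ 2 ≤ q}
      = Sset A B C q := rfl
  have hd2 : (4 * A * C - B ^ 2 : ℤ) = (4 * A' * C' - B' ^ 2 : ℤ) := by linarith [hdisc]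
  rw [hset, hcount q, hd2, show q ^ ((1:ℝ)/2) = Real.sqrt q from (Real.sqrt_eq_rpow q).symm]
  exact main_reduced A' B' C' hA' hB' hC' q hq
end
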